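/- Let X and Y be two standard Borel measurable spaces, let T : X → X and S : Y → Y be invertible bi-measurable transformations, and let σ be a σ-finite measure on X × Y such that: (i) there exist measurable X₀ ⊂ X and Y₀ ⊂ Y with 0 < σ(X₀ × Y₀) < ∞; (ii) σ is T×S-invariant; (iii) the dynamical system (X×Y, T×S, σ) is conservative and ergodic; (iv) Id×S is nonsingular with respect to σ. Then σ is in fact Id×S-invariant, and there exist two measures μ on X and ν on Y, invariant by T and S respectively, such that σ = μ ⊗ ν. Moreover, the dynamical systems (X, μ, T) and (Y, ν, S) are conservative and ergodic. -/

import Mathlib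

open MeasureTheory Set
open scoped ENNReal NNReal Classical

noncomputable section

/-- Heights of the towers of the infinite Chacon transformation
(tower `0` is `[0,1)` with a single level, so `chaconH 1 = 8`). -/
def chaconH : ℕ → ℕ
  | 0 => 1
  | n + 1 => 2 * (3 * chaconH n + 1)

/-- Left endpoint of level `k` of tower `n`.  At step `n+1`, tower `n` (which fills
`[0, hₙ·3⁻ⁿ)`) is cut into three subcolumns of equal width; one spacer is added above the
middle subcolumn and `3hₙ+1` spacers above the third one, the spacers being taken
successively as the leftmost intervals of length `3⁻⁽ⁿ⁺¹⁾` in the unused part of `ℝ₊`;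
then the three subcolumns are stacked left under right. -/
def chaconL : ℕ → ℕ → ℝ
  | 0, _ => 0
  | n + 1, k =>
      if k < chaconH n then chaconL n k
      else if k < 2 * chaconH n then chaconL n (k - chaconH n) + (3 : ℝ)⁻¹ ^ (n + 1)
      else if k = 2 * chaconH n then (chaconH n : ℝ) * (3 : ℝ)⁻¹ ^ n
      else if k ≤ 3 * chaconH n then
        chaconL n (k - 2 * chaconH n - 1) + 2 * (3 : ℝ)⁻¹ ^ (n + 1)
      else (chaconH n : ℝ) * (3 : ℝ)⁻¹ ^ n
        + ((k : ℝ) - 3 * (chaconH n : ℝ)) * (3 : ℝ)⁻¹ ^ (n + 1)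

/-- Level `k` of tower `n`: an interval of length `3⁻ⁿ`, closed to the left and open to
the right. -/
def chaconLevel (n k : ℕ) : Set ℝ := Ico (chaconL n k) (chaconL n k + (3 : ℝ)⁻¹ ^ n)

/-- The Chacon transformation on `ℝ`: each point of a non-top level of some tower is sent
to the point directly above it (the value does not depend on the choice of the tower). -/
def chaconT0 (x : ℝ) : ℝ :=
  if h : ∃ p : ℕ × ℕ, p.2 + 1 < chaconH p.1 ∧ x ∈ chaconLevel p.1 p.2 then
    x - chaconL h.choose.1 h.choose.2 + chaconL h.choose.1 (h.choose.2 + 1)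
  else x

/-- The inverse of the Chacon transformation on `ℝ`. -/
def chaconT0inv (x : ℝ) : ℝ :=
  if h : ∃ p : ℕ × ℕ, p.2 + 1 < chaconH p.1 ∧ x ∈ chaconLevel p.1 (p.2 + 1) then
    x - chaconL h.choose.1 (h.choose.2 + 1) + chaconL h.choose.1 h.choose.2
  else x

/-- The space `X = ℝ₊`. -/
abbrev ChaconX : Type := ↥(Set.Ici (0 : ℝ))

/-- The infinite Chacon transformation `T` on `X = ℝ₊`. -/
def chaconT (x : ChaconX) : ChaconX :=
  ⟨max 0 (chaconT0 (x : ℝ)), Set.mem_Ici.mpr (le_max_left 0 _)⟩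

/-- The inverse `T⁻¹` of the Chacon transformation on `X = ℝ₊`. -/
def chaconTinv (x : ChaconX) : ChaconX :=
  ⟨max 0 (chaconT0inv (x : ℝ)), Set.mem_Ici.mpr (le_max_left 0 _)⟩

/-- Integer powers `T^j` of the Chacon transformation. -/
def chaconTZ (j : ℤ) : ChaconX → ChaconX :=
  if 0 ≤ j then chaconT^[j.toNat] else chaconTinv^[(-j).toNat]

/-- Lebesgue measure `μ` on `X = ℝ₊`. -/
def chaconMu : Measure ChaconX := volume.comap Subtype.val

/-- `C n`: the bottom half of tower `n` (its lowest `hₙ/2` levels), as a subset of `X`. -/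
def chaconC (n : ℕ) : Set ChaconX :=
  {x | ∃ k, k < chaconH n / 2 ∧ (x : ℝ) ∈ chaconLevel n k}

/-- `tₙ x ∈ {1,2,3}`: the subcolumn of tower `n` containing `x`
(junk value `0` if `x` is not in tower `n`). -/
def chaconTn (n : ℕ) (x : ChaconX) : ℕ :=
  if h : ∃ k, k < chaconH n ∧ (x : ℝ) ∈ chaconLevel n k then
    1 + (⌊((x : ℝ) - chaconL n h.choose) * (3 : ℝ) ^ (n + 1)⌋).toNat
  else 0

/-- The Cartesian power `T^{×ι}` of the Chacon transformation, acting coordinatewise. -/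
def chaconTd (ι : Type) (x : ι → ChaconX) : ι → ChaconX := fun i => chaconT (x i)

/-- Integer powers `(T^{×ι})^j`, acting coordinatewise. -/
def chaconTdZ (ι : Type) (j : ℤ) (x : ι → ChaconX) : ι → ChaconX := fun i => chaconTZ j (x i)

/-- `Cₙ^ι ⊆ X^ι`. -/
def chaconCd (ι : Type) (n : ℕ) : Set (ι → ChaconX) := {x | ∀ i, x i ∈ chaconC n}

/-- An `n`-box: a Cartesian product of levels of `C n`. -/
def IsNBox (ι : Type) (n : ℕ) (B : Set (ι → ChaconX)) : Prop :=
  ∃ k : ι → ℕ, (∀ i, k i < chaconH n / 2) ∧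
    B = {x : ι → ChaconX | ∀ i, ((x i : ℝ)) ∈ chaconLevel n (k i)}

/-- An `n`-diagonal: a maximal finite family of `n`-boxes `B, T^{×d}B, …, (T^{×d})^ℓ B`,
regarded as the union of its boxes. -/
def IsNDiagonal (ι : Type) (n : ℕ) (D : Set (ι → ChaconX)) : Prop :=
  ∃ (B : Set (ι → ChaconX)) (ℓ : ℕ),
    (∀ j : ℕ, j ≤ ℓ → IsNBox ι n (chaconTdZ ι (j : ℤ) '' B)) ∧
    ¬ chaconTdZ ι (-1) '' B ⊆ chaconCd ι n ∧
    ¬ chaconTdZ ι ((ℓ : ℤ) + 1) '' B ⊆ chaconCd ι n ∧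
    D = ⋃ j ∈ Finset.range (ℓ + 1), chaconTdZ ι (j : ℤ) '' B

/-- A measure is boundedly finite if bounded (measurable) sets have finite measure. -/
def BoundedlyFinite {α : Type*} [MeasurableSpace α] [PseudoMetricSpace α]
    (σ : Measure α) : Prop :=
  ∀ A : Set α, MeasurableSet A → Bornology.IsBounded A → σ A < ⊤

/-- Diagonal measures on `X^ι`: boundedly finite, `T^{×ι}`-invariant measures which are,
for every large enough `n`, concentrated on a single `n`-diagonal inside `Cₙ^ι`. -/
def IsDiagonalMeasure (ι : Type) [Fintype ι] (σ : Measure (ι → ChaconX)) : Prop :=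
  BoundedlyFinite σ ∧ σ.map (chaconTd ι) = σ ∧
    ∃ n₀ : ℕ, 1 ≤ n₀ ∧ ∀ n, n₀ ≤ n →
      ∃ D : Set (ι → ChaconX), IsNDiagonal ι n D ∧ σ (chaconCd ι n \ D) = 0

/-- A wandering set for the `ℤ`-action `Uz`. -/
def ZWandering {α : Type*} (Uz : ℤ → α → α) (W : Set α) : Prop :=
  ∀ j k : ℤ, j ≠ k → Disjoint (Uz j '' W) (Uz k '' W)

/-- Conservativity: every measurable wandering set is null. -/
def ZConservative {α : Type*} [MeasurableSpace α] (σ : Measure α) (Uz : ℤ → α → α) : Prop :=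
  ∀ W : Set α, MeasurableSet W → ZWandering Uz W → σ W = 0

/-- Total dissipativity: mod `σ`, the space is the disjoint union of the iterates of a
wandering set. -/
def ZTotallyDissipative {α : Type*} [MeasurableSpace α] (σ : Measure α)
    (Uz : ℤ → α → α) : Prop :=
  ∃ W : Set α, MeasurableSet W ∧ ZWandering Uz W ∧ σ ((⋃ j : ℤ, Uz j '' W)ᶜ) = 0

/-- Ergodicity of a (not necessarily finite) invariant measure: every invariant
measurable set is null or conull. -/
def MeasErgodic {α : Type*} [MeasurableSpace α] (σ : Measure α) (U : α → α) : Prop :=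
  ∀ A : Set α, MeasurableSet A → U ⁻¹' A = A → σ A = 0 ∨ σ Aᶜ = 0

/-- `Icc a b` is an `n`-crossing for `x`: a maximal finite set of consecutive integers `j`
with `(T^{×ι})^j x ∈ Cₙ^ι`. -/
def IsCrossing (ι : Type) (n : ℕ) (x : ι → ChaconX) (a b : ℤ) : Prop :=
  a ≤ b ∧ (∀ j : ℤ, a ≤ j → j ≤ b → chaconTdZ ι j x ∈ chaconCd ι n) ∧
    chaconTdZ ι (a - 1) x ∉ chaconCd ι n ∧ chaconTdZ ι (b + 1) x ∉ chaconCd ι n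

/-- `n(x)`: the smallest `n ≥ 1` with `x ∈ Cₙ^ι`. -/
def chaconNOf (ι : Type) (x : ι → ChaconX) : ℕ :=
  if h : ∃ n : ℕ, 1 ≤ n ∧ x ∈ chaconCd ι n then Nat.find h else 0

/-- `B(τ)`: the points of `B` whose coordinate `i` lies in subcolumn `τ i` of tower `n`. -/
def chaconBoxTau (ι : Type) (n : ℕ) (B : Set (ι → ChaconX)) (τ : ι → ℕ) :
    Set (ι → ChaconX) :=
  {x ∈ B | ∀ i, chaconTn n (x i) = τ i}

/-- The transition from the `n`-diagonal `D` to the `(n+1)`-diagonal `D'` is the central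
one, i.e. `D' = D(1,…,1)`. -/
def CentralTransition (ι : Type) (n : ℕ) (D D' : Set (ι → ChaconX)) : Prop :=
  ∀ B : Set (ι → ChaconX), IsNBox ι n B → B ⊆ D →
    chaconBoxTau ι n B (fun _ => 1) ⊆ D'

/-- The `n`-diagonal containing a given set (junk value `∅` if there is none). -/
def diagOfBox (ι : Type) (n : ℕ) (B : Set (ι → ChaconX)) : Set (ι → ChaconX) :=
  if h : ∃ D, IsNDiagonal ι n D ∧ B ⊆ D then h.choose else ∅

/-- `D(τ)`: the `(n+1)`-diagonal containing `B(τ)` for an `n`-box `B ⊆ D`. -/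
def diagTau (ι : Type) (n : ℕ) (D : Set (ι → ChaconX)) (τ : ι → ℕ) : Set (ι → ChaconX) :=
  if h : ∃ B, IsNBox ι n B ∧ B ⊆ D then diagOfBox ι (n + 1) (chaconBoxTau ι n h.choose τ)
  else ∅

/-- A consistent family of diagonals `(Dₙ)_{n ≥ n₀}`. -/
def IsConsistentFamily (ι : Type) (n₀ : ℕ) (D : ℕ → Set (ι → ChaconX)) : Prop :=
  (∀ n, n₀ ≤ n → IsNDiagonal ι n (D n)) ∧
    (chaconCd ι (n₀ - 1) ∩ ⋂ n, ⋂ (_ : n₀ ≤ n), D n).Nonempty ∧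
    ∀ n, n₀ ≤ n → D (n + 1) ∩ chaconCd ι n ⊆ D n

/-- `x` is seen by the family of diagonals `(Dₙ)_{n ≥ n₀}`. -/
def SeenByFam (ι : Type) (n₀ : ℕ) (D : ℕ → Set (ι → ChaconX)) (x : ι → ChaconX) : Prop :=
  ∀ n, n₀ ≤ n → x ∉ chaconCd ι n ∨ x ∈ D n

/-- Graph joinings arising from powers of `T`:
`σ(A₁ × ⋯ × A_d) = α μ(T^{-k₁}A₁ ∩ ⋯ ∩ T^{-k_d}A_d)` for some `0 < α < ∞`. -/
def IsGraphJoining (ι : Type) [Fintype ι] (σ : Measure (ι → ChaconX)) : Prop :=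
  ∃ (α : ℝ≥0∞) (k : ι → ℤ), 0 < α ∧ α ≠ ⊤ ∧
    ∀ A : ι → Set ChaconX, (∀ i, MeasurableSet (A i)) →
      σ (Set.univ.pi A) = α * chaconMu (⋂ i, chaconTZ (k i) ⁻¹' A i)

/-- Ergodic components of `σ`: the nonzero boundedly finite `T^{×ι}`-invariant ergodic
measures, absolutely continuous with respect to `σ`, which appear in its ergodic
decomposition. -/
def IsErgodicComponent (ι : Type) [Fintype ι] (σ ρ : Measure (ι → ChaconX)) : Prop :=
  ρ ≠ 0 ∧ BoundedlyFinite ρ ∧ ρ.map (chaconTd ι) = ρ ∧ MeasErgodic ρ (chaconTd ι) ∧ ρ ≪ σ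

end

/-!
Since `id × S` commutes with `T × S`, the measure `(id × S)_* σ` is again `(T × S)`-invariant and
absolutely continuous with respect to `σ`, so by ergodicity its density is a constant `c`. If
`c < 1`, then `(id × S)ⁿ` maps `A ∩ (T × S)⁻ⁿ A` into `A = X₀ × Y₀`, so these returns have measure
at most `cⁿ σ(A)`; if `c > 1` the same holds for `T × id` and `c⁻¹`. Summable returns contradict
Poincaré recurrence by Borel–Cantelli, hence `c = 1`.

Once `σ` is invariant under `id × S` (and therefore under `T × id`), for every `E` the measure
`F ↦ σ(E × F)` is `S`-invariant and absolutely continuous with respect to `ν(F) = σ(X₀ × F)`, for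
which `S` is ergodic. When it is σ-finite, which holds for `E` inside some `T⁻ⁱ X₀` (by ergodicity
these sets cover `X` up to a null set), it is a multiple of `ν`. Thus
`σ(X₀ × Y₀) σ(E × F) = σ(E × Y₀) σ(X₀ × F)`, which says `σ = μ ⊗ ν` with
`μ(E) = σ(E × Y₀) / σ(X₀ × Y₀)`. Conservativity and ergodicity pass from the product to its factors.
-/

namespace Equiv.Perm

variable {α β : Type*}

theorem coe_zpow_eq_ite (e : Perm α) (j : ℤ) :
    ⇑(e ^ j) = if 0 ≤ j then (⇑e)^[j.toNat] else (⇑e.symm)^[(-j).toNat] := by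
  obtain ⟨n, rfl | rfl⟩ := Int.eq_nat_or_neg j
  · simp [coe_pow]
  · rcases Nat.eq_zero_or_pos n with rfl | hn
    · simp
    · simp [zpow_neg, ← inv_pow, coe_pow, inv_def, hn.ne']

theorem coe_prodCongr_zpow (e₁ : Perm α) (e₂ : Perm β) (j : ℤ) :
    ⇑((e₁.prodCongr e₂) ^ j) = Prod.map ⇑(e₁ ^ j) ⇑(e₂ ^ j) := by
  simp only [coe_zpow_eq_ite, prodCongr_symm, prodCongr_apply]
  split_ifs <;> exact Prod.map_iterate _ _ _

theorem preimage_iUnion_zpow_preimage (e : Perm α) (s : Set α) :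
    e ⁻¹' ⋃ j : ℤ, (e ^ j) ⁻¹' s = ⋃ j : ℤ, (e ^ j) ⁻¹' s := by
  simp only [preimage_iUnion, ← preimage_comp, ← coe_mul, ← zpow_add_one]
  exact (Equiv.addRight (1 : ℤ)).surjective.iUnion_comp (fun j => (e ^ j) ⁻¹' s)

theorem zWandering_of_forall_iterate_notMem {e : Perm α} {s : Set α}
    (h : ∀ x ∈ s, ∀ n ≠ 0, (⇑e)^[n] x ∉ s) : ZWandering (fun j : ℤ => ⇑(e ^ j)) s := by
  have key : ∀ x ∈ s, ∀ y ∈ s, ∀ n : ℕ, (e ^ (n : ℤ)) x = y → n = 0 := by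
    intro x hx y hy n hxy
    by_contra hn
    rw [zpow_natCast, coe_pow] at hxy
    exact h x hx n hn (hxy ▸ hy)
  intro j k hjk
  rw [Set.disjoint_left]
  rintro _ ⟨x, hx, rfl⟩ ⟨y, hy, hxy : (e ^ k) y = (e ^ j) x⟩
  have hy' : (e ^ (j - k)) x = y := by
    rw [sub_eq_neg_add, zpow_add, mul_apply, ← hxy, ← mul_apply, ← zpow_add, neg_add_cancel,
      zpow_zero, one_apply]
  obtain ⟨n, hn | hn⟩ := Int.eq_nat_or_neg (j - k)
  · have := key x hx y hy n (hn ▸ hy')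
    omega
  · have hx' : (e ^ (n : ℤ)) y = x := by
      rw [← hy', ← mul_apply, ← zpow_add, hn, add_neg_cancel, zpow_zero, one_apply]
    have := key y hy x hx n hx'
    omega

end Equiv.Perm

theorem ZWandering.prodCongr {α β : Type*} {e₁ : Equiv.Perm α} {e₂ : Equiv.Perm β}
    {s : Set α} {t : Set β}
    (h : ZWandering (fun j : ℤ => ⇑(e₁ ^ j)) s ∨ ZWandering (fun j : ℤ => ⇑(e₂ ^ j)) t) :
    ZWandering (fun j : ℤ => ⇑((e₁.prodCongr e₂) ^ j)) (s ×ˢ t) := by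
  intro j k hjk
  simp only [Equiv.Perm.coe_prodCongr_zpow, Set.prodMap_image_prod]
  exact Set.disjoint_prod.2 (h.imp (· j k hjk) (· j k hjk))

theorem MeasurableEquiv.measurable_coe_zpow {α : Type*} [MeasurableSpace α] (e : α ≃ᵐ α)
    (j : ℤ) : Measurable ⇑(e.toEquiv ^ j) := by
  rw [Equiv.Perm.coe_zpow_eq_ite]
  split
  · exact e.measurable.iterate _
  · exact e.symm.measurable.iterate _

section Dynamics

variable {α : Type*} [MeasurableSpace α] {μ μ' : Measure α} {f : α → α} {s t : Set α}

theorem zConservative_coe_zpow_iff (e : Equiv.Perm α) :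
    ZConservative μ (fun j : ℤ => ⇑(e ^ j)) ↔
      ZConservative μ (fun j : ℤ => if 0 ≤ j then (⇑e)^[j.toNat] else (⇑e.symm)^[(-j).toNat]) := by
  simp only [Equiv.Perm.coe_zpow_eq_ite]

theorem ZConservative.conservative {e : α ≃ᵐ α}
    (hc : ZConservative μ (fun j : ℤ => ⇑(e.toEquiv ^ j))) (he : MeasurePreserving e μ μ) :
    Conservative e μ where
  toQuasiMeasurePreserving := he.quasiMeasurePreserving
  exists_mem_iterate_mem' s hs hμs := by
    by_contra! h
    exact hμs (hc s hs (Equiv.Perm.zWandering_of_forall_iterate_notMem h))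

theorem MeasErgodic.preErgodic (h : MeasErgodic μ f) : PreErgodic f μ :=
  ⟨fun s hs hfs => Filter.eventuallyConst_set'.2 ((h s hs hfs).imp ae_eq_empty.2 ae_eq_univ.2)⟩

theorem PreErgodic.measErgodic (h : PreErgodic f μ) : MeasErgodic μ f :=
  fun _ hs hfs => h.measure_self_or_compl_eq_zero hs hfs

theorem PreErgodic.of_absolutelyContinuous (h : PreErgodic f μ) (hμ' : μ' ≪ μ) :
    PreErgodic f μ' :=
  ⟨fun _ hs hfs => (h.aeconst_set hs hfs).anti hμ'.ae_le⟩

theorem PreErgodic.ae_mem_of_subset (h : PreErgodic f μ) (hs : MeasurableSet s)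
    (hfs : f ⁻¹' s = s) (hts : t ⊆ s) (ht : μ t ≠ 0) : ∀ᵐ x ∂μ, x ∈ s :=
  (h.ae_mem_or_ae_notMem hs hfs).resolve_right fun h' =>
    ht (measure_mono_null hts (measure_eq_zero_iff_ae_notMem.2 h'))

namespace MeasureTheory

theorem MeasurePreserving.zpow {e : α ≃ᵐ α} (h : MeasurePreserving e μ μ) (j : ℤ) :
    MeasurePreserving ⇑(e.toEquiv ^ j) μ μ := by
  rw [Equiv.Perm.coe_zpow_eq_ite]
  split
  · exact h.iterate _
  · exact (h.symm e).iterate _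

/-- Poincaré recurrence against Borel–Cantelli. -/
theorem Conservative.measure_eq_zero_of_tsum_ne_top (hf : Conservative f μ) (hs : MeasurableSet s)
    (hsum : ∑' n, μ (s ∩ f^[n] ⁻¹' s) ≠ ⊤) : μ s = 0 := by
  refine measure_eq_zero_iff_ae_notMem.2 ?_
  filter_upwards [hf.ae_mem_imp_frequently_image_mem hs.nullMeasurableSet,
    ae_eventually_notMem hsum] with x hrec hfin hx
  exact ((hrec hx).and_eventually hfin).exists.elim fun n hn => hn.2 ⟨hx, hn.1⟩

theorem Measure.map_iterate_eq_pow_smul {c : ℝ≥0∞} (hf : Measurable f) (h : μ.map f = c • μ)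
    (n : ℕ) : μ.map f^[n] = c ^ n • μ := by
  induction n with
  | zero => simp
  | succ n ih =>
    rw [Function.iterate_succ', ← Measure.map_map hf (hf.iterate n), ih, Measure.map_smul, h,
      smul_smul, pow_succ]

theorem Measure.ne_zero_and_ne_top_of_map_eq_smul {e : α ≃ᵐ α} {c : ℝ≥0∞}
    (h : μ.map e = c • μ) (hs0 : μ s ≠ 0) (hs : μ s ≠ ⊤) : c ≠ 0 ∧ c ≠ ⊤ := by
  have hcs : μ s = c * μ (e.symm ⁻¹' s) := by
    rw [← smul_eq_mul, ← Measure.smul_apply, ← h, e.map_apply, ← Set.preimage_comp,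
      e.symm_comp_self, Set.preimage_id]
  refine ⟨?_, ?_⟩ <;> rintro rfl
  · exact hs0 (by simpa using hcs)
  · by_cases h0 : μ (e.symm ⁻¹' s) = 0
    · exact hs0 (by simpa [h0] using hcs)
    · exact hs (by rwa [ENNReal.top_mul h0] at hcs)

theorem Conservative.measure_eq_zero_of_map_eq_smul {g : α → α} {c : ℝ≥0∞}
    (hf : Conservative f μ) (hg : Measurable g) (hc : c < 1) (hgμ : μ.map g = c • μ)
    (hs : MeasurableSet s) (hμs : μ s ≠ ⊤) (hmaps : ∀ n, MapsTo g^[n] (s ∩ f^[n] ⁻¹' s) s) :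
    μ s = 0 := by
  refine hf.measure_eq_zero_of_tsum_ne_top hs (ne_top_of_le_ne_top (b := ∑' n, c ^ n * μ s) ?_
    (ENNReal.tsum_le_tsum fun n => (measure_mono (hmaps n).subset_preimage).trans_eq ?_))
  · rw [ENNReal.tsum_mul_right, ENNReal.tsum_geometric]
    exact ENNReal.mul_ne_top (ENNReal.inv_ne_top.2 (tsub_pos_of_lt hc).ne') hμs
  · rw [← Measure.map_apply (hg.iterate n) hs, Measure.map_iterate_eq_pow_smul hg hgμ,
      Measure.smul_apply, smul_eq_mul]

theorem Measure.exists_eq_smul_of_quasiErgodic [SigmaFinite μ] [SigmaFinite μ']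
    (hf : MeasurableEmbedding f) (herg : QuasiErgodic f μ) (hμ : μ.map f = μ)
    (hμ' : μ'.map f = μ') (hac : μ' ≪ μ) : ∃ c : ℝ≥0∞, μ' = c • μ := by
  have hinv := hf.rnDeriv_map μ' μ
  rw [hμ, hμ'] at hinv
  obtain ⟨c, hc⟩ :=
    herg.ae_eq_const_of_ae_eq_comp₀ (Measure.measurable_rnDeriv μ' μ).nullMeasurable hinv
  refine ⟨c, ?_⟩
  rw [← Measure.withDensity_rnDeriv_eq μ' μ hac, withDensity_congr_ae hc]
  exact withDensity_const c

theorem sigmaFinite_of_ae_mem_iUnion {ι : Type*} [Countable ι] {u : ι → Set α}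
    (hu : ∀ i, μ (u i) < ⊤) (hae : ∀ᵐ x ∂μ, x ∈ ⋃ i, u i) : SigmaFinite μ := by
  refine Measure.sigmaFinite_of_countable (S := insert (⋃ i, u i)ᶜ (range u))
    ((countable_range u).insert _) ?_ ?_
  · rintro _ (rfl | ⟨i, rfl⟩)
    · rw [measure_eq_zero_iff_ae_notMem.2 (by simpa using hae)]
      exact ENNReal.zero_lt_top
    · exact hu i
  · rw [sUnion_insert, sUnion_range, compl_union_self]

theorem Measure.ext_of_ae_mem_iUnion {ι : Type*} [Countable ι] {u : ι → Set α}
    (hu : ∀ i, MeasurableSet (u i)) (hμ : ∀ᵐ x ∂μ, x ∈ ⋃ i, u i)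
    (hμ' : ∀ᵐ x ∂μ', x ∈ ⋃ i, u i) (h : ∀ i E, MeasurableSet E → E ⊆ u i → μ E = μ' E) :
    μ = μ' := by
  rw [← Measure.restrict_eq_self_of_ae_mem hμ, ← Measure.restrict_eq_self_of_ae_mem hμ',
    Measure.restrict_iUnion_congr]
  refine fun i => Measure.ext fun E hE => ?_
  rw [Measure.restrict_apply hE, Measure.restrict_apply hE]
  exact h i _ (hE.inter (hu i)) inter_subset_right

end MeasureTheory

end Dynamics

section Slices

variable {α β : Type*} [MeasurableSpace α] [MeasurableSpace β] {σ : Measure (α × β)}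
  {μ : Measure α} {ν : Measure β}

namespace MeasureTheory.Measure

noncomputable def sliceSnd (σ : Measure (α × β)) (E : Set α) : Measure β :=
  (σ.restrict (E ×ˢ univ)).map Prod.snd

noncomputable def sliceFst (σ : Measure (α × β)) (F : Set β) : Measure α :=
  (σ.restrict (univ ×ˢ F)).map Prod.fst

theorem sliceSnd_apply (σ : Measure (α × β)) (E : Set α) {F : Set β} (hF : MeasurableSet F) :
    σ.sliceSnd E F = σ (E ×ˢ F) := by
  rw [sliceSnd, map_apply measurable_snd hF, restrict_apply (measurable_snd hF), ← univ_prod,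
    prod_inter_prod, univ_inter, inter_univ]

theorem sliceFst_apply (σ : Measure (α × β)) (F : Set β) {E : Set α} (hE : MeasurableSet E) :
    σ.sliceFst F E = σ (E ×ˢ F) := by
  rw [sliceFst, map_apply measurable_fst hE, restrict_apply (measurable_fst hE), ← prod_univ,
    prod_inter_prod, univ_inter, inter_univ]

theorem ae_mem_sliceSnd {t : Set β} (ht : MeasurableSet t) (h : ∀ᵐ p ∂σ, p.2 ∈ t) (E : Set α) :
    ∀ᵐ y ∂σ.sliceSnd E, y ∈ t :=
  (ae_map_iff measurable_snd.aemeasurable ht).2 (ae_restrict_of_ae h)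

theorem ae_mem_sliceFst {s : Set α} (hs : MeasurableSet s) (h : ∀ᵐ p ∂σ, p.1 ∈ s) (F : Set β) :
    ∀ᵐ x ∂σ.sliceFst F, x ∈ s :=
  (ae_map_iff measurable_fst.aemeasurable hs).2 (ae_restrict_of_ae h)

end MeasureTheory.Measure

theorem MeasureTheory.MeasurePreserving.sliceSnd {ς : β ≃ᵐ β}
    (h : MeasurePreserving (Prod.map id ς) σ σ) {E : Set α} (hE : MeasurableSet E) :
    MeasurePreserving ς (σ.sliceSnd E) (σ.sliceSnd E) := by
  refine ⟨ς.measurable, Measure.ext fun F hF => ?_⟩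
  rw [Measure.map_apply ς.measurable hF, Measure.sliceSnd_apply _ _ hF,
    Measure.sliceSnd_apply _ _ (ς.measurable hF),
    ← h.measure_preimage (hE.prod hF).nullMeasurableSet]
  rfl

theorem MeasureTheory.MeasurePreserving.sliceFst {τ : α ≃ᵐ α}
    (h : MeasurePreserving (Prod.map τ id) σ σ) {F : Set β} (hF : MeasurableSet F) :
    MeasurePreserving τ (σ.sliceFst F) (σ.sliceFst F) := by
  refine ⟨τ.measurable, Measure.ext fun E hE => ?_⟩
  rw [Measure.map_apply τ.measurable hE, Measure.sliceFst_apply _ _ hE,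
    Measure.sliceFst_apply _ _ (τ.measurable hE),
    ← h.measure_preimage (hE.prod hF).nullMeasurableSet]
  rfl

theorem PreErgodic.sliceSnd {f : α → α} {g : β → β} (h : PreErgodic (Prod.map f g) σ)
    (E : Set α) : PreErgodic g (σ.sliceSnd E) :=
  (MeasurePreserving.mk measurable_snd rfl).preErgodic_of_preErgodic_semiconj
    (h.of_absolutelyContinuous (Measure.absolutelyContinuous_of_le Measure.restrict_le_self))
    fun _ => rfl

theorem PreErgodic.of_prod_left [SFinite ν] {f : α → α} {g : β → β}
    (h : PreErgodic (Prod.map f g) (μ.prod ν)) (hν : ν ≠ 0) : PreErgodic f μ := by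
  have h' := (MeasurePreserving.mk measurable_fst Measure.map_fst_prod
    ).preErgodic_of_preErgodic_semiconj h (f' := f) fun _ => rfl
  refine ⟨fun s hs hfs => ?_⟩
  simpa only [Measure.ae_ennreal_smul_measure_eq (Measure.measure_univ_ne_zero.2 hν)] using
    h'.aeconst_set hs hfs

theorem PreErgodic.of_prod_right [SFinite ν] {f : α → α} {g : β → β}
    (h : PreErgodic (Prod.map f g) (μ.prod ν)) (hμ : μ ≠ 0) : PreErgodic g ν := by
  have h' := (MeasurePreserving.mk measurable_snd Measure.map_snd_prod
    ).preErgodic_of_preErgodic_semiconj h (f' := g) fun _ => rfl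
  refine ⟨fun s hs hfs => ?_⟩
  simpa only [Measure.ae_ennreal_smul_measure_eq (Measure.measure_univ_ne_zero.2 hμ)] using
    h'.aeconst_set hs hfs

variable {e₁ : Equiv.Perm α} {e₂ : Equiv.Perm β}

theorem ZConservative.of_prod_left [SFinite ν]
    (h : ZConservative (μ.prod ν) (fun j : ℤ => ⇑((e₁.prodCongr e₂) ^ j))) (hν : ν ≠ 0) :
    ZConservative μ (fun j : ℤ => ⇑(e₁ ^ j)) := fun W hW hw => by
  have h0 := h _ (hW.prod MeasurableSet.univ) (ZWandering.prodCongr (.inl hw))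
  rw [Measure.prod_prod] at h0
  exact (mul_eq_zero.1 h0).resolve_right (Measure.measure_univ_ne_zero.2 hν)

theorem ZConservative.of_prod_right [SFinite ν]
    (h : ZConservative (μ.prod ν) (fun j : ℤ => ⇑((e₁.prodCongr e₂) ^ j))) (hμ : μ ≠ 0) :
    ZConservative ν (fun j : ℤ => ⇑(e₂ ^ j)) := fun W hW hw => by
  have h0 := h _ (MeasurableSet.univ.prod hW) (ZWandering.prodCongr (.inr hw))
  rw [Measure.prod_prod] at h0
  exact (mul_eq_zero.1 h0).resolve_left (Measure.measure_univ_ne_zero.2 hμ)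

end Slices

namespace MeasureTheory

variable {X Y : Type*} [MeasurableSpace X] [MeasurableSpace Y] {σ : Measure (X × Y)}
  {τ : X ≃ᵐ X} {ς : Y ≃ᵐ Y} {X₀ : Set X} {Y₀ : Set Y}

theorem map_prodMap_id_eq_self [SigmaFinite σ] (hU : MeasurePreserving (Prod.map τ ς) σ σ)
    (herg : PreErgodic (Prod.map τ ς) σ) (hcons : Conservative (Prod.map τ ς) σ)
    (hac : σ.map (Prod.map id ς) ≪ σ) (hX₀ : MeasurableSet X₀) (hY₀ : MeasurableSet Y₀)
    (hpos : σ (X₀ ×ˢ Y₀) ≠ 0) (hfin : σ (X₀ ×ˢ Y₀) ≠ ⊤) : σ.map (Prod.map id ς) = σ := by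
  set U : X × Y → X × Y := Prod.map τ ς
  set R : X × Y → X × Y := Prod.map id ς
  set V : X × Y → X × Y := Prod.map τ id
  have hR : Measurable R := measurable_id.prodMap ς.measurable
  have hV : Measurable V := τ.measurable.prodMap measurable_id
  have hA : MeasurableSet (X₀ ×ˢ Y₀) := hX₀.prod hY₀
  have : SigmaFinite (σ.map R) :=
    MeasurableEmbedding.sigmaFinite_map ((MeasurableEquiv.refl X).prodCongr ς).measurableEmbedding
  have hRinv : (σ.map R).map U = σ.map R := by
    rw [Measure.map_map hU.measurable hR, show U ∘ R = R ∘ U from rfl,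
      ← Measure.map_map hR hU.measurable, hU.map_eq]
  obtain ⟨c, hc⟩ := Measure.exists_eq_smul_of_quasiErgodic
    (τ.prodCongr ς).measurableEmbedding ⟨hU.quasiMeasurePreserving, herg⟩ hU.map_eq hRinv hac
  obtain ⟨hc0, hctop⟩ := Measure.ne_zero_and_ne_top_of_map_eq_smul
    (e := (MeasurableEquiv.refl X).prodCongr ς) hc hpos hfin
  have hmapsR : ∀ n, MapsTo R^[n] (X₀ ×ˢ Y₀ ∩ U^[n] ⁻¹' (X₀ ×ˢ Y₀)) (X₀ ×ˢ Y₀) := by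
    rintro n ⟨x, y⟩ ⟨⟨hx, -⟩, -, hy⟩
    simp_all [R, U, Prod.map_iterate]
  have hmapsV : ∀ n, MapsTo V^[n] (X₀ ×ˢ Y₀ ∩ U^[n] ⁻¹' (X₀ ×ˢ Y₀)) (X₀ ×ˢ Y₀) := by
    rintro n ⟨x, y⟩ ⟨⟨-, hy⟩, hx, -⟩
    simp_all [V, U, Prod.map_iterate]
  rcases lt_trichotomy c 1 with hlt | rfl | hgt
  · exact absurd (hcons.measure_eq_zero_of_map_eq_smul hR hlt hc hA hfin hmapsR) hpos
  · rw [hc, one_smul]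
  · have hcV : σ.map V = c⁻¹ • σ := by
      calc σ.map V = c⁻¹ • c • σ.map V := by
            rw [smul_smul, ENNReal.inv_mul_cancel hc0 hctop, one_smul]
        _ = c⁻¹ • (σ.map R).map V := by rw [hc, Measure.map_smul]
        _ = c⁻¹ • σ := by rw [Measure.map_map hV hR, show V ∘ R = U from rfl, hU.map_eq]
    exact absurd (hcons.measure_eq_zero_of_map_eq_smul hV (ENNReal.inv_lt_one.2 hgt) hcV hA hfin
      hmapsV) hpos

theorem MeasurePreserving.prodMap_id_right_of_prodMap (hU : MeasurePreserving (Prod.map τ ς) σ σ)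
    (hR : MeasurePreserving (Prod.map id ς) σ σ) : MeasurePreserving (Prod.map τ id) σ σ := by
  convert hU.comp (hR.symm ((MeasurableEquiv.refl X).prodCongr ς)) using 1
  ext p
  · rfl
  · exact (ς.apply_symm_apply p.2).symm

theorem MeasurePreserving.prodMap_zpow_id (h : MeasurePreserving (Prod.map τ id) σ σ) (i : ℤ) :
    MeasurePreserving (Prod.map ⇑(τ.toEquiv ^ i) id) σ σ := by
  convert MeasurePreserving.zpow (e := τ.prodCongr (MeasurableEquiv.refl Y)) h i
  change _ = ⇑((τ.toEquiv.prodCongr (Equiv.refl Y)) ^ i)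
  rw [Equiv.Perm.coe_prodCongr_zpow, ← Equiv.Perm.one_def, one_zpow, Equiv.Perm.coe_one]

theorem MeasurePreserving.prodMap_id_zpow (h : MeasurePreserving (Prod.map id ς) σ σ) (k : ℤ) :
    MeasurePreserving (Prod.map id ⇑(ς.toEquiv ^ k)) σ σ := by
  convert MeasurePreserving.zpow (e := (MeasurableEquiv.refl X).prodCongr ς) h k
  change _ = ⇑(((Equiv.refl X).prodCongr ς.toEquiv) ^ k)
  rw [Equiv.Perm.coe_prodCongr_zpow, ← Equiv.Perm.one_def, one_zpow, Equiv.Perm.coe_one]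

theorem measure_zpow_preimage_prod (hV : MeasurePreserving (Prod.map τ id) σ σ) (i : ℤ)
    {E : Set X} {F : Set Y} (hE : MeasurableSet E) (hF : MeasurableSet F) :
    σ (((τ.toEquiv ^ i) ⁻¹' E) ×ˢ F) = σ (E ×ˢ F) := by
  rw [← (hV.prodMap_zpow_id i).measure_preimage (hE.prod hF).nullMeasurableSet,
    Set.preimage_prod_map_prod, Set.preimage_id]

theorem measure_prod_zpow_preimage (hR : MeasurePreserving (Prod.map id ς) σ σ) (k : ℤ)
    {E : Set X} {F : Set Y} (hE : MeasurableSet E) (hF : MeasurableSet F) :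
    σ (E ×ˢ ((ς.toEquiv ^ k) ⁻¹' F)) = σ (E ×ˢ F) := by
  rw [← (hR.prodMap_id_zpow k).measure_preimage (hE.prod hF).nullMeasurableSet,
    Set.preimage_prod_map_prod, Set.preimage_id]

theorem _root_.PreErgodic.ae_fst_mem_iUnion_zpow_preimage (herg : PreErgodic (Prod.map τ ς) σ)
    (hX₀ : MeasurableSet X₀) (hpos : σ (X₀ ×ˢ Y₀) ≠ 0) :
    ∀ᵐ p ∂σ, p.1 ∈ ⋃ i : ℤ, (τ.toEquiv ^ i) ⁻¹' X₀ := by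
  refine herg.ae_mem_of_subset (s := Prod.fst ⁻¹' ⋃ i : ℤ, (τ.toEquiv ^ i) ⁻¹' X₀)
    (measurable_fst (.iUnion fun i => τ.measurable_coe_zpow i hX₀)) ?_ ?_ hpos
  · change Prod.fst ⁻¹' (τ.toEquiv ⁻¹' _) = _
    rw [Equiv.Perm.preimage_iUnion_zpow_preimage]
  · rintro ⟨x, y⟩ ⟨hx, -⟩
    exact Set.mem_iUnion.2 ⟨0, by simpa using hx⟩

theorem _root_.PreErgodic.ae_snd_mem_iUnion_zpow_preimage (herg : PreErgodic (Prod.map τ ς) σ)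
    (hY₀ : MeasurableSet Y₀) (hpos : σ (X₀ ×ˢ Y₀) ≠ 0) :
    ∀ᵐ p ∂σ, p.2 ∈ ⋃ k : ℤ, (ς.toEquiv ^ k) ⁻¹' Y₀ := by
  refine herg.ae_mem_of_subset (s := Prod.snd ⁻¹' ⋃ k : ℤ, (ς.toEquiv ^ k) ⁻¹' Y₀)
    (measurable_snd (.iUnion fun k => ς.measurable_coe_zpow k hY₀)) ?_ ?_ hpos
  · change Prod.snd ⁻¹' (ς.toEquiv ⁻¹' _) = _
    rw [Equiv.Perm.preimage_iUnion_zpow_preimage]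
  · rintro ⟨x, y⟩ ⟨-, hy⟩
    exact Set.mem_iUnion.2 ⟨0, by simpa using hy⟩

/-- The `ς`-saturation of `F` gives a `(τ × ς)`-invariant cylinder, null as soon as its trace
on `X₀` is. -/
theorem measure_univ_prod_eq_zero_of_measure_prod_eq_zero (herg : PreErgodic (Prod.map τ ς) σ)
    (hR : MeasurePreserving (Prod.map id ς) σ σ) (hX₀ : MeasurableSet X₀)
    (hpos : σ (X₀ ×ˢ Y₀) ≠ 0) {F : Set Y} (hF : MeasurableSet F) (h0 : σ (X₀ ×ˢ F) = 0) :
    σ (univ ×ˢ F) = 0 := by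
  set Fs := ⋃ k : ℤ, (ς.toEquiv ^ k) ⁻¹' F
  have hFs : MeasurableSet Fs := .iUnion fun k => ς.measurable_coe_zpow k hF
  have hnull : σ (X₀ ×ˢ Fs) = 0 := by
    rw [Set.prod_iUnion]
    exact measure_iUnion_null fun k => by rwa [measure_prod_zpow_preimage hR k hX₀ hF]
  have hinv : Prod.map τ ς ⁻¹' (Prod.snd ⁻¹' Fs) = Prod.snd ⁻¹' Fs := by
    change Prod.snd ⁻¹' (ς.toEquiv ⁻¹' _) = _
    rw [Equiv.Perm.preimage_iUnion_zpow_preimage]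
  rcases herg.ae_mem_or_ae_notMem (measurable_snd hFs) hinv with h | h
  · refine absurd (measure_mono_null (fun p hp => ?_) (measure_union_null hnull (ae_iff.1 h))) hpos
    by_cases hpF : p.2 ∈ Fs
    · exact Or.inl ⟨hp.1, hpF⟩
    · exact Or.inr hpF
  · refine measure_mono_null (fun p hp => ?_) (measure_eq_zero_iff_ae_notMem.2 h)
    exact Set.mem_iUnion.2 ⟨0, by simpa using hp.2⟩

theorem sigmaFinite_sliceSnd (herg : PreErgodic (Prod.map τ ς) σ) (hY₀ : MeasurableSet Y₀)
    (hpos : σ (X₀ ×ˢ Y₀) ≠ 0) {E : Set X}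
    (hE : ∀ k : ℤ, σ (E ×ˢ ((ς.toEquiv ^ k) ⁻¹' Y₀)) ≠ ⊤) : SigmaFinite (σ.sliceSnd E) :=
  sigmaFinite_of_ae_mem_iUnion
    (fun k => by rw [Measure.sliceSnd_apply _ _ (ς.measurable_coe_zpow k hY₀)]; exact (hE k).lt_top)
    (Measure.ae_mem_sliceSnd (.iUnion fun k => ς.measurable_coe_zpow k hY₀)
      (herg.ae_snd_mem_iUnion_zpow_preimage hY₀ hpos) E)

theorem measure_prod_mul_measure_prod_eq_of_forall_ne_top [SigmaFinite σ]
    (herg : PreErgodic (Prod.map τ ς) σ)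
    (hR : MeasurePreserving (Prod.map id ς) σ σ) (hX₀ : MeasurableSet X₀) (hY₀ : MeasurableSet Y₀)
    (hpos : σ (X₀ ×ˢ Y₀) ≠ 0) (hfin : σ (X₀ ×ˢ Y₀) ≠ ⊤) {E : Set X} (hE : MeasurableSet E)
    (hEfin : ∀ k : ℤ, σ (E ×ˢ ((ς.toEquiv ^ k) ⁻¹' Y₀)) ≠ ⊤) {F : Set Y} (hF : MeasurableSet F) :
    σ (X₀ ×ˢ Y₀) * σ (E ×ˢ F) = σ (E ×ˢ Y₀) * σ (X₀ ×ˢ F) := by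
  have : SigmaFinite (σ.sliceSnd X₀) := sigmaFinite_sliceSnd herg hY₀ hpos fun k => by
    rwa [measure_prod_zpow_preimage hR k hX₀ hY₀]
  have : SigmaFinite (σ.sliceSnd E) := sigmaFinite_sliceSnd herg hY₀ hpos hEfin
  have hac : σ.sliceSnd E ≪ σ.sliceSnd X₀ := Measure.AbsolutelyContinuous.mk fun F hF h0 => by
    rw [Measure.sliceSnd_apply _ _ hF] at h0 ⊢
    exact measure_mono_null (Set.prod_mono_left (Set.subset_univ E))
      (measure_univ_prod_eq_zero_of_measure_prod_eq_zero herg hR hX₀ hpos hF h0)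
  obtain ⟨c, hc⟩ := Measure.exists_eq_smul_of_quasiErgodic ς.measurableEmbedding
    ⟨(hR.sliceSnd hX₀).quasiMeasurePreserving, herg.sliceSnd X₀⟩ (hR.sliceSnd hX₀).map_eq
    (hR.sliceSnd hE).map_eq hac
  have hslice : ∀ F, MeasurableSet F → σ (E ×ˢ F) = c * σ (X₀ ×ˢ F) := fun F hF => by
    rw [← Measure.sliceSnd_apply _ _ hF, ← Measure.sliceSnd_apply _ _ hF, hc, Measure.smul_apply,
      smul_eq_mul]
  rw [hslice F hF, hslice Y₀ hY₀]
  ring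

theorem measure_prod_mul_measure_prod_eq [SigmaFinite σ] (hU : MeasurePreserving (Prod.map τ ς) σ σ)
    (herg : PreErgodic (Prod.map τ ς) σ) (hR : MeasurePreserving (Prod.map id ς) σ σ)
    (hX₀ : MeasurableSet X₀) (hY₀ : MeasurableSet Y₀) (hpos : σ (X₀ ×ˢ Y₀) ≠ 0)
    (hfin : σ (X₀ ×ˢ Y₀) ≠ ⊤) {E : Set X} {F : Set Y} (hE : MeasurableSet E)
    (hF : MeasurableSet F) : σ (X₀ ×ˢ Y₀) * σ (E ×ˢ F) = σ (E ×ˢ Y₀) * σ (X₀ ×ˢ F) := by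
  have hpiece : ∀ i : ℤ, MeasurableSet ((τ.toEquiv ^ i) ⁻¹' X₀) := fun i =>
    τ.measurable_coe_zpow i hX₀
  have hXs := Measure.ae_mem_sliceFst (.iUnion hpiece)
    (herg.ae_fst_mem_iUnion_zpow_preimage hX₀ hpos)
  have key : σ (X₀ ×ˢ Y₀) • σ.sliceFst F = σ (X₀ ×ˢ F) • σ.sliceFst Y₀ := by
    refine Measure.ext_of_ae_mem_iUnion hpiece (Measure.ae_smul_measure (hXs F) _)
      (Measure.ae_smul_measure (hXs Y₀) _) fun i E' hE' hE'i => ?_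
    rw [Measure.smul_apply, Measure.smul_apply, Measure.sliceFst_apply _ _ hE',
      Measure.sliceFst_apply _ _ hE', smul_eq_mul, smul_eq_mul,
      measure_prod_mul_measure_prod_eq_of_forall_ne_top herg hR hX₀ hY₀ hpos hfin hE'
        (fun k => ?_) hF, mul_comm]
    refine ne_top_of_le_ne_top ?_ (measure_mono (Set.prod_mono_left hE'i))
    rwa [measure_zpow_preimage_prod (hU.prodMap_id_right_of_prodMap hR) i hX₀
      (ς.measurable_coe_zpow k hY₀),
      measure_prod_zpow_preimage hR k hX₀ hY₀]
  have hE' := congrArg (fun m : Measure X => m E) key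
  simp only [Measure.smul_apply, Measure.sliceFst_apply _ _ hE, smul_eq_mul] at hE'
  rw [hE', mul_comm]

theorem exists_measurePreserving_eq_prod [SigmaFinite σ] (hU : MeasurePreserving (Prod.map τ ς) σ σ)
    (herg : PreErgodic (Prod.map τ ς) σ) (hR : MeasurePreserving (Prod.map id ς) σ σ)
    (hX₀ : MeasurableSet X₀) (hY₀ : MeasurableSet Y₀) (hpos : σ (X₀ ×ˢ Y₀) ≠ 0)
    (hfin : σ (X₀ ×ˢ Y₀) ≠ ⊤) :
    ∃ (μ : Measure X) (ν : Measure Y), SigmaFinite μ ∧ SigmaFinite ν ∧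
      MeasurePreserving τ μ μ ∧ MeasurePreserving ς ν ν ∧ σ = μ.prod ν := by
  have hV := hU.prodMap_id_right_of_prodMap hR
  have hpiece : ∀ i : ℤ, MeasurableSet ((τ.toEquiv ^ i) ⁻¹' X₀) := fun i =>
    τ.measurable_coe_zpow i hX₀
  set a := σ (X₀ ×ˢ Y₀)
  have hμ : SigmaFinite (a⁻¹ • σ.sliceFst Y₀) := by
    refine sigmaFinite_of_ae_mem_iUnion (fun i => ?_) (Measure.ae_smul_measure
      (Measure.ae_mem_sliceFst (.iUnion hpiece)
        (herg.ae_fst_mem_iUnion_zpow_preimage hX₀ hpos) Y₀) _)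
    rw [Measure.smul_apply, Measure.sliceFst_apply _ _ (hpiece i),
      measure_zpow_preimage_prod hV i hX₀ hY₀,
      smul_eq_mul, ENNReal.inv_mul_cancel hpos hfin]
    exact ENNReal.one_lt_top
  have hν : SigmaFinite (σ.sliceSnd X₀) := sigmaFinite_sliceSnd herg hY₀ hpos fun k => by
    rwa [measure_prod_zpow_preimage hR k hX₀ hY₀]
  refine ⟨_, _, hμ, hν, (hV.sliceFst hY₀).smul_measure _, hR.sliceSnd hX₀,
    (Measure.prod_eq fun E F hE hF => ?_).symm⟩
  rw [Measure.smul_apply, Measure.sliceFst_apply _ _ hE, Measure.sliceSnd_apply _ _ hF, smul_eq_mul,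
    mul_assoc, ← measure_prod_mul_measure_prod_eq hU herg hR hX₀ hY₀ hpos hfin hE hF, ← mul_assoc,
    ENNReal.inv_mul_cancel hpos hfin, one_mul]

end MeasureTheory

theorem product_theorem_general {X Y : Type*} [MeasurableSpace X] [MeasurableSpace Y]
    (T : X → X) (Tinv : X → X) (hT : Measurable T) (hTinv : Measurable Tinv)
    (hTl : Function.LeftInverse Tinv T) (hTr : Function.RightInverse Tinv T)
    (S : Y → Y) (Sinv : Y → Y) (hS : Measurable S) (hSinv : Measurable Sinv)
    (hSl : Function.LeftInverse Sinv S) (hSr : Function.RightInverse Sinv S)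
    (σ : Measure (X × Y)) [SigmaFinite σ]
    (X₀ : Set X) (Y₀ : Set Y) (hX₀ : MeasurableSet X₀) (hY₀ : MeasurableSet Y₀)
    (hpos : 0 < σ (X₀ ×ˢ Y₀)) (hfin : σ (X₀ ×ˢ Y₀) < ⊤)
    (hinv : σ.map (Prod.map T S) = σ)
    (hcons : ZConservative σ (fun j : ℤ =>
      if 0 ≤ j then (Prod.map T S)^[j.toNat] else (Prod.map Tinv Sinv)^[(-j).toNat]))
    (herg : MeasErgodic σ (Prod.map T S))
    (hns1 : σ.map (Prod.map (id : X → X) S) ≪ σ) :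
    σ.map (Prod.map (id : X → X) S) = σ ∧
    ∃ (μ : Measure X) (ν : Measure Y),
      SigmaFinite μ ∧ SigmaFinite ν ∧
      μ.map T = μ ∧ ν.map S = ν ∧ σ = μ.prod ν ∧
      ZConservative μ (fun j : ℤ => if 0 ≤ j then T^[j.toNat] else Tinv^[(-j).toNat]) ∧
      MeasErgodic μ T ∧
      ZConservative ν (fun j : ℤ => if 0 ≤ j then S^[j.toNat] else Sinv^[(-j).toNat]) ∧
      MeasErgodic ν S := by
  let τ : X ≃ᵐ X := ⟨⟨T, Tinv, hTl, hTr⟩, hT, hTinv⟩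
  let ς : Y ≃ᵐ Y := ⟨⟨S, Sinv, hSl, hSr⟩, hS, hSinv⟩
  have hU : MeasurePreserving (Prod.map τ ς) σ σ := ⟨hT.prodMap hS, hinv⟩
  have hconsU := (zConservative_coe_zpow_iff (τ.toEquiv.prodCongr ς.toEquiv)).2 hcons
  have hR : σ.map (Prod.map id ς) = σ := map_prodMap_id_eq_self hU herg.preErgodic
    (hconsU.conservative (e := τ.prodCongr ς) hU) hns1 hX₀ hY₀ hpos.ne' hfin.ne
  obtain ⟨μ, ν, hμ, hν, hμτ, hνς, rfl⟩ := exists_measurePreserving_eq_prod hU herg.preErgodic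
    ⟨measurable_id.prodMap hS, hR⟩ hX₀ hY₀ hpos.ne' hfin.ne
  have hμ0 : μ ≠ 0 := by rintro rfl; simp at hpos
  have hν0 : ν ≠ 0 := by rintro rfl; simp at hpos
  exact ⟨hR, μ, ν, hμ, hν, hμτ.map_eq, hνς.map_eq, rfl,
    (zConservative_coe_zpow_iff τ.toEquiv).1 (hconsU.of_prod_left hν0),
    (herg.preErgodic.of_prod_left hν0).measErgodic,
    (zConservative_coe_zpow_iff ς.toEquiv).1 (hconsU.of_prod_right hμ0),
    (herg.preErgodic.of_prod_right hμ0).measErgodic⟩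

/-- **Theorem (product theorem).**  Let `X` and `Y` be standard Borel spaces,
`T : X → X` and `S : Y → Y` invertible bi-measurable transformations, and `σ` a σ-finite
measure on `X × Y` such that: some product set `X₀ × Y₀` has finite positive measure;
`σ` is `T×S`-invariant; `(X×Y, T×S, σ)` is conservative and ergodic; and `Id×S` is
nonsingular with respect to `σ`.  Then `σ` is `Id×S`-invariant and `σ = μ ⊗ ν` for some
`T`-invariant measure `μ` on `X` and `S`-invariant measure `ν` on `Y`; moreover the
systems `(X, μ, T)` and `(Y, ν, S)` are conservative and ergodic. -/
theorem product_theorem {X Y : Type*} [MeasurableSpace X] [StandardBorelSpace X]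
    [MeasurableSpace Y] [StandardBorelSpace Y]
    (T : X → X) (Tinv : X → X) (hT : Measurable T) (hTinv : Measurable Tinv)
    (hTl : Function.LeftInverse Tinv T) (hTr : Function.RightInverse Tinv T)
    (S : Y → Y) (Sinv : Y → Y) (hS : Measurable S) (hSinv : Measurable Sinv)
    (hSl : Function.LeftInverse Sinv S) (hSr : Function.RightInverse Sinv S)
    (σ : Measure (X × Y)) [SigmaFinite σ]
    (X₀ : Set X) (Y₀ : Set Y) (hX₀ : MeasurableSet X₀) (hY₀ : MeasurableSet Y₀)
    (hpos : 0 < σ (X₀ ×ˢ Y₀)) (hfin : σ (X₀ ×ˢ Y₀) < ⊤)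
    (hinv : σ.map (Prod.map T S) = σ)
    (hcons : ZConservative σ (fun j : ℤ =>
      if 0 ≤ j then (Prod.map T S)^[j.toNat] else (Prod.map Tinv Sinv)^[(-j).toNat]))
    (herg : MeasErgodic σ (Prod.map T S))
    (hns1 : σ.map (Prod.map (id : X → X) S) ≪ σ)
    (hns2 : σ ≪ σ.map (Prod.map (id : X → X) S)) :
    σ.map (Prod.map (id : X → X) S) = σ ∧
    ∃ (μ : Measure X) (ν : Measure Y),
      SigmaFinite μ ∧ SigmaFinite ν ∧
      μ.map T = μ ∧ ν.map S = ν ∧ σ = μ.prod ν ∧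
      ZConservative μ (fun j : ℤ => if 0 ≤ j then T^[j.toNat] else Tinv^[(-j).toNat]) ∧
      MeasErgodic μ T ∧
      ZConservative ν (fun j : ℤ => if 0 ≤ j then S^[j.toNat] else Sinv^[(-j).toNat]) ∧
      MeasErgodic ν S :=
  product_theorem_general T Tinv hT hTinv hTl hTr S Sinv hS hSinv hSl hSr σ X₀ Y₀ hX₀ hY₀ hpos hfin
    hinv hcons herg hns1
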